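/- For every integer p ≥ 2, the sum ∑_{k=1}^{p-1} csc²(kπ/p) equals (p² − 1)/3. -/

import Mathlib

/-!
Let ζ be a primitive `p`-th root of unity, so that `4 sin² (kπ/p) = (1 - ζ^k) (1 - ζ^(-k))`.
For a `p`-th root of unity `x ≠ 1` one has `(1 - x) F(x) = -p` with `F(x) = ∑_{j<p} j x^j`, so
each summand `1 / |1 - ζ^k|²` equals `|F(ζ^k)|² / p²`. Parseval's identity for the discrete Fourier
transform gives `∑_{k<p} |F(ζ^k)|² = p ∑_{j<p} j²`; removing the term `k = 0`, which is
`F(1)² = (∑_{j<p} j)²`, leaves `(p ∑ j² - (∑ j)²) / p² = (p² - 1) / 12`.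
-/

open Real Finset

theorem one_sub_mul_sum_range_nat_mul_pow {R : Type*} [CommRing R] (x : R) (n : ℕ) :
    (1 - x) * ∑ j ∈ range n, (j : R) * x ^ j = ∑ j ∈ range n, x ^ j - 1 - (n - 1) * x ^ n := by
  induction n with
  | zero => simp
  | succ n ih =>
    rw [sum_range_succ, sum_range_succ]
    push_cast
    linear_combination ih

theorem sum_range_natCast_mul_two {R : Type*} [CommRing R] (n : ℕ) :
    (∑ j ∈ range n, (j : R)) * 2 = n * (n - 1) := by
  induction n with
  | zero => simp
  | succ n ih => rw [sum_range_succ, add_mul, ih]; push_cast; ring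

theorem sum_range_natCast_sq_mul_six {R : Type*} [CommRing R] (n : ℕ) :
    (∑ j ∈ range n, (j : R) ^ 2) * 6 = n * (n - 1) * (2 * n - 1) := by
  induction n with
  | zero => simp
  | succ n ih => rw [sum_range_succ, add_mul, ih]; push_cast; ring

section Field

variable {K : Type*} [Field K]

theorem geom_sum_eq_zero_of_pow_eq_one {x : K} {n : ℕ} (hxn : x ^ n = 1) (hx : x ≠ 1) :
    ∑ k ∈ range n, x ^ k = 0 := by
  rw [geom_sum_eq hx, hxn, sub_self, zero_div]

theorem one_sub_mul_sum_range_nat_mul_pow_of_pow_eq_one {x : K} {n : ℕ} (hxn : x ^ n = 1)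
    (hx : x ≠ 1) : (1 - x) * ∑ j ∈ range n, (j : K) * x ^ j = -n := by
  rw [one_sub_mul_sum_range_nat_mul_pow, geom_sum_eq_zero_of_pow_eq_one hxn hx, hxn]
  ring

theorem inv_one_sub_mul_one_sub_inv_of_pow_eq_one {x : K} {n : ℕ} (hxn : x ^ n = 1)
    (hx : x ≠ 1) (hn : (n : K) ≠ 0) :
    ((1 - x) * (1 - x⁻¹))⁻¹ =
      (∑ j ∈ range n, (j : K) * x ^ j) * (∑ j ∈ range n, (j : K) * x⁻¹ ^ j) / n ^ 2 := by
  have hx' : x⁻¹ ≠ 1 := inv_ne_one.mpr hx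
  have h1 := one_sub_mul_sum_range_nat_mul_pow_of_pow_eq_one hxn hx
  have h2 := one_sub_mul_sum_range_nat_mul_pow_of_pow_eq_one (by rw [inv_pow, hxn, inv_one]) hx'
  have hne : (1 - x) * (1 - x⁻¹) ≠ 0 :=
    mul_ne_zero (sub_ne_zero.mpr hx.symm) (sub_ne_zero.mpr hx'.symm)
  rw [eq_div_iff (pow_ne_zero 2 hn), inv_mul_eq_iff_eq_mul₀ hne]
  linear_combination (-(1 - x⁻¹) * ∑ j ∈ range n, (j : K) * x⁻¹ ^ j) * h1 + n * h2

namespace IsPrimitiveRoot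

variable {ζ : K} {p : ℕ}

theorem geom_sum_pow_mul_inv_pow_eq_zero (hζ : IsPrimitiveRoot ζ p) {j m : ℕ} (hj : j < p)
    (hm : m < p) (hjm : j ≠ m) : ∑ k ∈ range p, (ζ ^ j * ζ⁻¹ ^ m) ^ k = 0 := by
  have hζ0 : ζ ≠ 0 := hζ.ne_zero (by omega)
  refine geom_sum_eq_zero_of_pow_eq_one ?_ ?_
  · rw [mul_pow, ← pow_mul, ← pow_mul, mul_comm j, mul_comm m, pow_mul, pow_mul, hζ.pow_eq_one,
      hζ.inv.pow_eq_one, one_pow, one_pow, one_mul]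
  · rw [inv_pow, Ne, mul_inv_eq_one₀ (pow_ne_zero m hζ0)]
    exact fun h => hjm (hζ.pow_inj hj hm h)

theorem sum_range_dft_mul_dft_inv (hζ : IsPrimitiveRoot ζ p) (a b : ℕ → K) :
    ∑ k ∈ range p, (∑ j ∈ range p, a j * (ζ ^ k) ^ j) * (∑ m ∈ range p, b m * (ζ⁻¹ ^ k) ^ m) =
      p * ∑ j ∈ range p, a j * b j := by
  calc _ = ∑ j ∈ range p, ∑ m ∈ range p,
          a j * b m * ∑ k ∈ range p, (ζ ^ j * ζ⁻¹ ^ m) ^ k := by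
        simp_rw [sum_mul_sum, mul_sum]
        rw [sum_comm]
        refine sum_congr rfl fun j _ => ?_
        rw [sum_comm]
        refine sum_congr rfl fun m _ => sum_congr rfl fun k _ => ?_
        ring
    _ = ∑ j ∈ range p, a j * b j * p := by
        refine sum_congr rfl fun j hj => ?_
        have hζ0 : ζ ≠ 0 := hζ.ne_zero (Nat.ne_zero_of_lt (mem_range.mp hj))
        rw [sum_eq_single j]
        · rw [← mul_pow, mul_inv_cancel₀ hζ0, one_pow]
          simp
        · intro m hm hmj
          rw [hζ.geom_sum_pow_mul_inv_pow_eq_zero (mem_range.mp hj) (mem_range.mp hm)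
            (Ne.symm hmj), mul_zero]
        · exact fun h => absurd hj h
    _ = _ := by rw [mul_sum]; exact sum_congr rfl fun j _ => mul_comm _ _

-- Not divided by 12, so that it holds in every characteristic not dividing `p`.
theorem twelve_mul_sum_Ico_inv_one_sub_pow_mul_one_sub_inv_pow (hζ : IsPrimitiveRoot ζ p)
    (hp : (p : K) ≠ 0) :
    12 * ∑ k ∈ Ico 1 p, ((1 - ζ ^ k) * (1 - ζ⁻¹ ^ k))⁻¹ = (p : K) ^ 2 - 1 := by
  have hp0 : 0 < p := Nat.pos_of_ne_zero (by rintro rfl; exact hp Nat.cast_zero)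
  set F : K → K := fun x => ∑ j ∈ range p, (j : K) * x ^ j
  have hterm : ∀ k ∈ Ico 1 p,
      ((1 - ζ ^ k) * (1 - ζ⁻¹ ^ k))⁻¹ = F (ζ ^ k) * F (ζ⁻¹ ^ k) / p ^ 2 := by
    intro k hk
    rw [mem_Ico] at hk
    have hζkp : (ζ ^ k) ^ p = 1 := by rw [pow_right_comm, hζ.pow_eq_one, one_pow]
    rw [inv_pow, inv_one_sub_mul_one_sub_inv_of_pow_eq_one hζkp
      (hζ.pow_ne_one_of_pos_of_lt (by omega) hk.2) hp]
  have hparseval :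
      ∑ k ∈ range p, F (ζ ^ k) * F (ζ⁻¹ ^ k) = p * ∑ j ∈ range p, (j : K) ^ 2 := by
    simpa only [sq] using hζ.sum_range_dft_mul_dft_inv (fun j => (j : K)) (fun j => j)
  rw [sum_range_eq_add_Ico _ hp0] at hparseval
  simp only [F, pow_zero, one_pow, mul_one] at hparseval
  have hS1 := sum_range_natCast_mul_two (R := K) p
  have hS2 := sum_range_natCast_sq_mul_six (R := K) p
  rw [sum_congr rfl hterm, ← sum_div, mul_div_assoc', div_eq_iff (pow_ne_zero 2 hp)]
  linear_combination 12 * hparseval + 2 * (p : K) * hS2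
    - 3 * (2 * ∑ j ∈ range p, (j : K) + p * (p - 1)) * hS1

end IsPrimitiveRoot
end Field

theorem Complex.one_sub_exp_mul_one_sub_exp_neg (θ : ℂ) :
    (1 - Complex.exp (2 * θ * Complex.I)) * (1 - Complex.exp (-(2 * θ * Complex.I))) =
      4 * Complex.sin θ ^ 2 := by
  have hcos : Complex.exp (2 * θ * Complex.I) + Complex.exp (-(2 * θ * Complex.I)) =
      2 * Complex.cos (2 * θ) := by
    rw [Complex.two_cos, neg_mul]
  have hexp : Complex.exp (2 * θ * Complex.I) * Complex.exp (-(2 * θ * Complex.I)) = 1 := by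
    rw [← Complex.exp_add, add_neg_cancel, Complex.exp_zero]
  linear_combination hexp - hcos - 4 * Complex.cos_sq_add_sin_sq θ - 2 * Complex.cos_two_mul θ

/-- Hirzebruch's trigonometric identity:
for every integer `p ≥ 2`, `∑_{k=1}^{p-1} csc²(kπ/p) = (p² − 1)/3`. -/
theorem csc_sq_sum (p : ℕ) (hp : 2 ≤ p) :
    ∑ k ∈ Finset.Icc 1 (p - 1), (1 / Real.sin (k * Real.pi / p)) ^ 2
      = ((p : ℝ) ^ 2 - 1) / 3 := by
  have hp0 : p ≠ 0 := by omega
  set ζ := Complex.exp (2 * π * Complex.I / p)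
  have hterm : ∀ k : ℕ, (((1 / Real.sin (k * π / p)) ^ 2 : ℝ) : ℂ) =
      4 * ((1 - ζ ^ k) * (1 - ζ⁻¹ ^ k))⁻¹ := by
    intro k
    have hζk : ζ ^ k = Complex.exp (2 * (k * π / p : ℝ) * Complex.I) := by
      rw [← Complex.exp_nat_mul]
      push_cast
      ring_nf
    rw [inv_pow, hζk, ← Complex.exp_neg, Complex.one_sub_exp_mul_one_sub_exp_neg,
      ← Complex.ofReal_sin]
    push_cast
    ring
  apply Complex.ofReal_injective
  rw [Complex.ofReal_sum, sum_congr rfl fun k _ => hterm k, ← mul_sum,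
    Finset.Icc_sub_one_right_eq_Ico_of_not_isMin (by simp [hp0])]
  have hζ : IsPrimitiveRoot ζ p := Complex.isPrimitiveRoot_exp p hp0
  have hsum := hζ.twelve_mul_sum_Ico_inv_one_sub_pow_mul_one_sub_inv_pow (by exact_mod_cast hp0)
  push_cast
  linear_combination hsum / 3
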